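/- Let n ≥ 2, let μ₂, …, μₙ and w be coefficient functions, let Q = −p̄ + μ₂p + μ₃p² + ⋯ + μₙp^{n−1}, and let I be the ideal of R generated by pⁿ and Q. Then for every k with 1 ≤ k ≤ n−1, the Poisson bracket {w·p^k, Q} is congruent modulo I to p^k·(∂̄w − μ₂·∂w + k·(∂μ₂)·w) + Σ_{l=1}^{n−1−k} p^{k+l}·(k·(∂μ_{l+2})·w − (l+1)·μ_{l+2}·∂w), where the sum is empty when k = n−1. -/
import Mathlib


open MvPolynomial

/-- The ring `R = ℂ[z, z̄, p, p̄]` with four independent formal variables: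
variable `0` is `z`, variable `1` is `z̄`, variable `2` is `p`, variable `3` is `p̄`. -/
abbrev RR : Type := MvPolynomial (Fin 4) ℂ

/-- The Poisson bracket
`{F,G} = F_p G_z − F_z G_p + F_p̄ G_z̄ − F_z̄ G_p̄` on `R = ℂ[z, z̄, p, p̄]`. -/
noncomputable def pb (F G : RR) : RR :=
  pderiv 2 F * pderiv 0 G - pderiv 0 F * pderiv 2 G
    + pderiv 3 F * pderiv 1 G - pderiv 1 F * pderiv 3 G

/-- A coefficient function: an element of the `ℂ`-subalgebra generated by `z` and `z̄`. -/
def IsCoeffFun (f : RR) : Prop := f ∈ Algebra.adjoin ℂ ({X 0, X 1} : Set RR)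

lemma coeff_pderiv23 {f : RR} (hf : IsCoeffFun f) :
    pderiv 2 f = 0 ∧ pderiv 3 f = 0 := by
  induction hf using Algebra.adjoin_induction with
  | mem x hx =>
      rcases hx with rfl | rfl <;>
        exact ⟨pderiv_X_of_ne (by decide), pderiv_X_of_ne (by decide)⟩
  | algebraMap c => simp [algebraMap_eq]
  | add x y hxm hym hx hy =>
      exact ⟨by rw [map_add, hx.1, hy.1, add_zero],
             by rw [map_add, hx.2, hy.2, add_zero]⟩
  | mul x y hxm hym hx hy =>
      exact ⟨by rw [pderiv_mul, hx.1, hy.1, mul_zero, zero_mul, add_zero],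
             by rw [pderiv_mul, hx.2, hy.2, mul_zero, zero_mul, add_zero]⟩

lemma pderiv2_pow (m : ℕ) : pderiv 2 ((X 2 : RR) ^ m) = C (m : ℂ) * X 2 ^ (m - 1) := by
  rw [Derivation.leibniz_pow, pderiv_X_self, smul_eq_mul, mul_one, nsmul_eq_mul, map_natCast]

lemma pderiv_pow_ne {i : Fin 4} (hi : (2 : Fin 4) ≠ i) (m : ℕ) :
    pderiv i ((X 2 : RR) ^ m) = 0 := by
  rw [Derivation.leibniz_pow, pderiv_X_of_ne hi]; simp

theorem stmt2 (n : ℕ) (hn : 2 ≤ n) (μ : ℕ → RR)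
    (hμ : ∀ j ∈ Finset.Icc 2 n, IsCoeffFun (μ j))
    (w : RR) (hw : IsCoeffFun w)
    (Q : RR) (hQ : Q = -X 3 + ∑ j ∈ Finset.Icc 2 n, μ j * X 2 ^ (j - 1))
    (I : Ideal RR) (hI : I = Ideal.span {X 2 ^ n, Q})
    (k : ℕ) (hk1 : 1 ≤ k) (hkn : k ≤ n - 1) :
    pb (w * X 2 ^ k) Q -
      (X 2 ^ k * (pderiv 1 w - μ 2 * pderiv 0 w + C (k : ℂ) * pderiv 0 (μ 2) * w)
        + ∑ l ∈ Finset.Icc 1 (n - 1 - k), X 2 ^ (k + l) *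
            (C (k : ℂ) * pderiv 0 (μ (l + 2)) * w
              - C ((l : ℂ) + 1) * μ (l + 2) * pderiv 0 w)) ∈ I := by
  have hw2 := (coeff_pderiv23 hw).1
  have hw3 := (coeff_pderiv23 hw).2
  -- derivatives of Q
  have hQ0 : pderiv 0 Q = ∑ j ∈ Finset.Icc 2 n, pderiv 0 (μ j) * X 2 ^ (j - 1) := by
    rw [hQ, map_add, map_sum, map_neg, pderiv_X_of_ne (by decide), neg_zero, zero_add]
    refine Finset.sum_congr rfl fun j hj => ?_
    rw [pderiv_mul, pderiv_pow_ne (by decide), mul_zero, add_zero]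
  have hQ2 : pderiv 2 Q
      = ∑ j ∈ Finset.Icc 2 n, C (((j - 1 : ℕ)) : ℂ) * μ j * X 2 ^ (j - 2) := by
    rw [hQ, map_add, map_sum, map_neg, pderiv_X_of_ne (by decide), neg_zero, zero_add]
    refine Finset.sum_congr rfl fun j hj => ?_
    rw [pderiv_mul, (coeff_pderiv23 (hμ j hj)).1, zero_mul, zero_add, pderiv2_pow,
      Nat.sub_sub]
    ring
  have hQ3 : pderiv 3 Q = -1 := by
    rw [hQ, map_add, map_sum, map_neg, pderiv_X_self,
      Finset.sum_eq_zero (fun j hj => by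
        rw [pderiv_mul, (coeff_pderiv23 (hμ j hj)).2, zero_mul, zero_add,
          pderiv_pow_ne (by decide), mul_zero]), add_zero]
  -- derivatives of w * X 2 ^ k
  have hW0 : pderiv 0 (w * X 2 ^ k) = pderiv 0 w * X 2 ^ k := by
    rw [pderiv_mul, pderiv_pow_ne (by decide), mul_zero, add_zero]
  have hW1 : pderiv 1 (w * X 2 ^ k) = pderiv 1 w * X 2 ^ k := by
    rw [pderiv_mul, pderiv_pow_ne (by decide), mul_zero, add_zero]
  have hW3 : pderiv 3 (w * X 2 ^ k) = 0 := by
    rw [pderiv_mul, pderiv_pow_ne (by decide), mul_zero, add_zero, hw3, zero_mul]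
  have hW2 : pderiv 2 (w * X 2 ^ k) = C (k : ℂ) * w * X 2 ^ (k - 1) := by
    rw [pderiv_mul, hw2, zero_mul, zero_add, pderiv2_pow]; ring
  set g : ℕ → RR := fun i => X 2 ^ (k + i) *
      (C (k : ℂ) * pderiv 0 (μ (i + 2)) * w
        - C ((i : ℂ) + 1) * μ (i + 2) * pderiv 0 w) with hg
  have hsum1 : ∑ i ∈ Finset.range (n - 1),
        (C (k : ℂ) * w * X 2 ^ (k - 1) * (pderiv 0 (μ (2 + i)) * X 2 ^ (2 + i - 1))
          - pderiv 0 w * X 2 ^ k * (C (((2 + i - 1 : ℕ)) : ℂ) * μ (2 + i) * X 2 ^ (2 + i - 2)))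
      = ∑ i ∈ Finset.range (n - 1), g i := by
    refine Finset.sum_congr rfl fun i _ => ?_
    obtain ⟨a, rfl⟩ : ∃ a, k = a + 1 := ⟨k - 1, by omega⟩
    simp only [hg]
    have e1 : 2 + i - 1 = i + 1 := by omega
    have e2 : 2 + i - 2 = i := by omega
    have e3 : 2 + i = i + 2 := by omega
    rw [e1, e2, e3, Nat.add_sub_cancel]
    push_cast
    ring
  have hA : pb (w * X 2 ^ k) Q
      = X 2 ^ k * pderiv 1 w + ∑ i ∈ Finset.range (n - 1), g i := by
    rw [pb, hW0, hW1, hW2, hW3, hQ0, hQ2, hQ3, zero_mul, add_zero, Finset.mul_sum,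
      Finset.mul_sum, ← Finset.sum_sub_distrib, ← Finset.Ico_add_one_right_eq_Icc,
      Finset.sum_Ico_eq_sum_range, show n + 1 - 2 = n - 1 by omega, hsum1,
      mul_neg_one, sub_neg_eq_add]
    ring
  have hB : X 2 ^ k * (pderiv 1 w - μ 2 * pderiv 0 w + C (k : ℂ) * pderiv 0 (μ 2) * w)
        + ∑ l ∈ Finset.Icc 1 (n - 1 - k), X 2 ^ (k + l) *
            (C (k : ℂ) * pderiv 0 (μ (l + 2)) * w
              - C ((l : ℂ) + 1) * μ (l + 2) * pderiv 0 w)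
      = X 2 ^ k * pderiv 1 w + g 0 + ∑ i ∈ Finset.range (n - 1 - k), g (i + 1) := by
    have hhead : X 2 ^ k * (pderiv 1 w - μ 2 * pderiv 0 w + C (k : ℂ) * pderiv 0 (μ 2) * w)
        = X 2 ^ k * pderiv 1 w + g 0 := by
      simp only [hg]
      simp only [Nat.add_zero, Nat.zero_add, Nat.cast_zero, zero_add, map_one]
      ring
    have hsum2 : ∑ l ∈ Finset.Icc 1 (n - 1 - k), X 2 ^ (k + l) *
            (C (k : ℂ) * pderiv 0 (μ (l + 2)) * w
              - C ((l : ℂ) + 1) * μ (l + 2) * pderiv 0 w)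
        = ∑ i ∈ Finset.range (n - 1 - k), g (i + 1) := by
      rw [← Finset.Ico_add_one_right_eq_Icc, Finset.sum_Ico_eq_sum_range,
        show n - 1 - k + 1 - 1 = n - 1 - k by omega]
      refine Finset.sum_congr rfl fun i _ => ?_
      simp only [hg]
      rw [show 1 + i = i + 1 by omega]
    rw [hhead, hsum2]
  have key : pb (w * X 2 ^ k) Q -
      (X 2 ^ k * (pderiv 1 w - μ 2 * pderiv 0 w + C (k : ℂ) * pderiv 0 (μ 2) * w)
        + ∑ l ∈ Finset.Icc 1 (n - 1 - k), X 2 ^ (k + l) *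
            (C (k : ℂ) * pderiv 0 (μ (l + 2)) * w
              - C ((l : ℂ) + 1) * μ (l + 2) * pderiv 0 w))
      = ∑ i ∈ Finset.Ico (n - 1 - k) (n - 2), g (i + 1) := by
    have hsplit : ∑ i ∈ Finset.range (n - 1), g i
        = (∑ i ∈ Finset.range (n - 2), g (i + 1)) + g 0 := by
      rw [show n - 1 = (n - 2) + 1 by omega, Finset.sum_range_succ']
    rw [hA, hB, hsplit, Finset.sum_Ico_eq_sub _ (show n - 1 - k ≤ n - 2 by omega)]
    ring
  rw [key, hI]
  refine Ideal.sum_mem _ fun i hi => ?_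
  rw [Finset.mem_Ico] at hi
  simp only [hg]
  rw [show k + (i + 1) = n + (k + i + 1 - n) by omega, pow_add, mul_assoc]
  exact Ideal.mul_mem_right _ _ (Ideal.subset_span (Set.mem_insert _ _))
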